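/- Let 1 < p < N, p* = Np/(N−p), let Ω ⊆ ℝ^N be a bounded nonempty open set, and let λ, μ > 0. Suppose w is C¹ on the closure of Ω with w > 0 in Ω, w = 0 on ∂Ω, ∫_Ω (|∇w|^p − λ w^p) dx > 0, and w belongs to the Nehari set, i.e. ∫_Ω |∇w|^p dx = ∫_Ω (λ w^p + w^{p*} − μ w) dx. Then for every t ≥ 0, I_μ(tw) ≤ I_μ(w), with equality if and only if t = 1; that is, max over t ≥ 0 of I_μ(tw) equals I_μ(w). -/

import Mathlib

/-!
Along the ray `t ↦ t w` the energy is the fibering map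
`φ(t) = a tᵖ/p - b t^{p*}/p* + c t` with `a = ∫ (|∇w|ᵖ - λ wᵖ) > 0`, `b = ∫ w^{p*}` and
`c = μ ∫ w ≥ 0`, and the Nehari identity reads `b = a + c`. Hence
`φ'(t) = a (t^{p-1} - t^{p*-1}) + c (1 - t^{p*-1})`, which is positive on `(0, 1)` and negative on
`(1, ∞)` because `p < p*`; so `t = 1` is the strict maximum of `φ` on `[0, ∞)`.
-/

open MeasureTheory Set

noncomputable section

/-- The critical Sobolev exponent `p* = Np/(N-p)`. -/
def pStar (N : ℕ) (p : ℝ) : ℝ := N * p / (N - p)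

/-- The energy functional `I_μ`. -/
def energyI (N : ℕ) (p lam μ : ℝ) (Ω : Set (EuclideanSpace ℝ (Fin N)))
    (u : EuclideanSpace ℝ (Fin N) → ℝ) : ℝ :=
  ∫ x in Ω, (‖gradient u x‖ ^ p / p - lam * u x ^ p / p
    - u x ^ pStar N p / pStar N p + μ * u x)

lemma lt_pStar {N : ℕ} {p : ℝ} (hp : 0 < p) (hpN : p < N) : p < pStar N p := by
  rw [pStar, lt_div_iff₀ (sub_pos.2 hpN)]
  nlinarith

def fiberingMap (p q a b c t : ℝ) : ℝ := t ^ p / p * a - t ^ q / q * b + c * t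

section fiberingMap

variable {p q a b c : ℝ}

lemma hasDerivAt_fiberingMap {t : ℝ} (ht : 0 < t) (hp : p ≠ 0) (hq : q ≠ 0) :
    HasDerivAt (fiberingMap p q a b c) (t ^ (p - 1) * a - t ^ (q - 1) * b + c) t := by
  have hp' := (Real.hasDerivAt_rpow_const (p := p) (Or.inl ht.ne')).div_const p
  have hq' := (Real.hasDerivAt_rpow_const (p := q) (Or.inl ht.ne')).div_const q
  refine (((hp'.mul_const a).fun_sub (hq'.mul_const b)).fun_add
    ((hasDerivAt_id' t).const_mul c)).congr_deriv ?_
  field_simp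

lemma continuousOn_fiberingMap (hp : 0 ≤ p) (hq : 0 ≤ q) :
    ContinuousOn (fiberingMap p q a b c) (Ici 0) := by
  have hp' := continuousOn_id.rpow_const (s := Ici (0 : ℝ)) fun _ _ => Or.inr hp
  have hq' := continuousOn_id.rpow_const (s := Ici (0 : ℝ)) fun _ _ => Or.inr hq
  exact (((hp'.div_const p).mul continuousOn_const).sub
    ((hq'.div_const q).mul continuousOn_const)).add (continuousOn_const.mul continuousOn_id)

variable (hp : 0 < p) (hpq : p < q) (hq : 1 ≤ q) (ha : 0 < a) (hc : 0 ≤ c) (hb : b = a + c)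
include hp hpq hq ha hc hb

lemma strictMonoOn_fiberingMap : StrictMonoOn (fiberingMap p q a b c) (Icc 0 1) := by
  refine strictMonoOn_of_deriv_pos (convex_Icc 0 1)
    ((continuousOn_fiberingMap hp.le (hp.trans hpq).le).mono Icc_subset_Ici_self) ?_
  intro t ht
  rw [interior_Icc] at ht
  rw [(hasDerivAt_fiberingMap ht.1 hp.ne' (hp.trans hpq).ne').deriv, hb]
  have hpow : t ^ (q - 1) < t ^ (p - 1) :=
    Real.rpow_lt_rpow_of_exponent_gt ht.1 ht.2 (by linarith)
  have hpow_le : t ^ (q - 1) ≤ 1 := Real.rpow_le_one ht.1.le ht.2.le (by linarith)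
  nlinarith [mul_pos ha (sub_pos.2 hpow)]

lemma strictAntiOn_fiberingMap : StrictAntiOn (fiberingMap p q a b c) (Ici 1) := by
  refine strictAntiOn_of_deriv_neg (convex_Ici 1)
    ((continuousOn_fiberingMap hp.le (hp.trans hpq).le).mono (Ici_subset_Ici.2 zero_le_one)) ?_
  intro t ht
  rw [interior_Ici] at ht
  rw [(hasDerivAt_fiberingMap (one_pos.trans ht) hp.ne' (hp.trans hpq).ne').deriv, hb]
  have hpow : t ^ (p - 1) < t ^ (q - 1) := Real.rpow_lt_rpow_of_exponent_lt ht (by linarith)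
  have hpow_ge : 1 ≤ t ^ (q - 1) := Real.one_le_rpow ht.le (by linarith)
  nlinarith [mul_pos ha (sub_pos.2 hpow)]

lemma fiberingMap_lt_fiberingMap_one {t : ℝ} (ht : 0 ≤ t) (ht1 : t ≠ 1) :
    fiberingMap p q a b c t < fiberingMap p q a b c 1 := by
  rcases ht1.lt_or_gt with ht1 | ht1
  · exact strictMonoOn_fiberingMap hp hpq hq ha hc hb ⟨ht, ht1.le⟩ ⟨zero_le_one, le_rfl⟩ ht1
  · exact strictAntiOn_fiberingMap hp hpq hq ha hc hb self_mem_Ici ht1.le ht1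

end fiberingMap

lemma gradient_const_mul {E : Type*} [NormedAddCommGroup E] [InnerProductSpace ℝ E]
    [CompleteSpace E] (c : ℝ) (f : E → ℝ) (x : E) :
    gradient (fun y => c * f y) x = c • gradient f x := by
  rw [gradient, show (fun y => c * f y) = c • f from rfl, fderiv_const_smul_field,
    Pi.smul_apply, map_smul, gradient]

lemma integrableOn_of_continuousOn_closure {X : Type*} [MetricSpace X] [ProperSpace X]
    [MeasurableSpace X] [BorelSpace X] {μ : Measure X} [IsFiniteMeasureOnCompacts μ]
    {Ω : Set X} {f : X → ℝ} (hΩ : Bornology.IsBounded Ω) (hf : ContinuousOn f (closure Ω)) :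
    IntegrableOn f Ω μ :=
  (hf.integrableOn_compact hΩ.isCompact_closure).mono_set subset_closure

section energy

variable {N : ℕ} {p lam μ : ℝ} {Ω : Set (EuclideanSpace ℝ (Fin N))}
  {w : EuclideanSpace ℝ (Fin N) → ℝ}

lemma energyI_const_mul (hΩ : MeasurableSet Ω) (hw0 : ∀ x ∈ Ω, 0 ≤ w x)
    (hgrad : IntegrableOn (fun x => ‖gradient w x‖ ^ p - lam * w x ^ p) Ω)
    (hwq : IntegrableOn (fun x => w x ^ pStar N p) Ω) (hw : IntegrableOn w Ω)
    {t : ℝ} (ht : 0 ≤ t) :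
    energyI N p lam μ Ω (fun x => t * w x) =
      fiberingMap p (pStar N p) (∫ x in Ω, (‖gradient w x‖ ^ p - lam * w x ^ p))
        (∫ x in Ω, w x ^ pStar N p) (μ * ∫ x in Ω, w x) t := by
  have hpointwise : EqOn
      (fun x => ‖gradient (fun y => t * w y) x‖ ^ p / p - lam * (t * w x) ^ p / p
        - (t * w x) ^ pStar N p / pStar N p + μ * (t * w x))
      (fun x => t ^ p / p * (‖gradient w x‖ ^ p - lam * w x ^ p)
        - t ^ pStar N p / pStar N p * w x ^ pStar N p + μ * t * w x) Ω := by
    intro x hx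
    simp only [gradient_const_mul, norm_smul, Real.norm_eq_abs, abs_of_nonneg ht]
    rw [Real.mul_rpow ht (norm_nonneg _), Real.mul_rpow ht (hw0 x hx),
      Real.mul_rpow ht (hw0 x hx)]
    ring
  have hgrad_t : IntegrableOn (fun x => t ^ p / p * (‖gradient w x‖ ^ p - lam * w x ^ p)) Ω :=
    hgrad.const_mul _
  have hwq_t : IntegrableOn (fun x => t ^ pStar N p / pStar N p * w x ^ pStar N p) Ω :=
    hwq.const_mul _
  have hdiff_t : IntegrableOn (fun x => t ^ p / p * (‖gradient w x‖ ^ p - lam * w x ^ p)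
      - t ^ pStar N p / pStar N p * w x ^ pStar N p) Ω := hgrad_t.sub hwq_t
  rw [energyI, setIntegral_congr_fun hΩ hpointwise, integral_add hdiff_t (hw.const_mul _),
    integral_sub hgrad_t hwq_t, integral_const_mul, integral_const_mul, integral_const_mul,
    fiberingMap]
  ring

lemma integral_rpow_pStar_eq_of_nehari
    (hgrad : IntegrableOn (fun x => ‖gradient w x‖ ^ p - lam * w x ^ p) Ω)
    (hwp : IntegrableOn (fun x => w x ^ p) Ω) (hwq : IntegrableOn (fun x => w x ^ pStar N p) Ω)
    (hw : IntegrableOn w Ω)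
    (hnehari : (∫ x in Ω, ‖gradient w x‖ ^ p) =
      ∫ x in Ω, (lam * w x ^ p + w x ^ pStar N p - μ * w x)) :
    ∫ x in Ω, w x ^ pStar N p =
      (∫ x in Ω, (‖gradient w x‖ ^ p - lam * w x ^ p)) + μ * ∫ x in Ω, w x := by
  have hgrad' : IntegrableOn (fun x => ‖gradient w x‖ ^ p) Ω := by
    simpa only [sub_add_cancel] using hgrad.fun_add (hwp.const_mul lam)
  rw [integral_sub hgrad' (hwp.const_mul lam), hnehari,
    integral_sub ((hwp.const_mul lam).fun_add hwq) (hw.const_mul μ),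
    integral_add (hwp.const_mul lam) hwq, integral_const_mul, integral_const_mul]
  ring

end energy

theorem nehari_fibering_max_general
    (N : ℕ) (p lam μ : ℝ) (Ω : Set (EuclideanSpace ℝ (Fin N)))
    (hp : 1 < p) (hpN : p < N)
    (hΩb : Bornology.IsBounded Ω) (hΩo : IsOpen Ω)
    (hμ : 0 < μ)
    (w : EuclideanSpace ℝ (Fin N) → ℝ) (hw : ContDiffOn ℝ 1 w (closure Ω))
    (hwpos : ∀ x ∈ Ω, 0 < w x)
    (hpos : 0 < ∫ x in Ω, (‖gradient w x‖ ^ p - lam * w x ^ p))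
    (hnehari : (∫ x in Ω, ‖gradient w x‖ ^ p) =
      ∫ x in Ω, (lam * w x ^ p + w x ^ pStar N p - μ * w x)) :
    ∀ t : ℝ, 0 ≤ t →
      energyI N p lam μ Ω (fun x => t * w x) ≤ energyI N p lam μ Ω w ∧
      (energyI N p lam μ Ω (fun x => t * w x) = energyI N p lam μ Ω w ↔ t = 1) := by
  intro t ht
  have hp0 : 0 < p := one_pos.trans hp
  have hpq : p < pStar N p := lt_pStar hp0 hpN
  have hw0 : ∀ x ∈ Ω, 0 ≤ w x := fun x hx => (hwpos x hx).le
  have hwc : ContinuousOn w (closure Ω) := hw.continuousOn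
  have hIw : IntegrableOn w Ω := integrableOn_of_continuousOn_closure hΩb hwc
  have hIwp : IntegrableOn (fun x => w x ^ p) Ω :=
    integrableOn_of_continuousOn_closure hΩb (hwc.rpow_const fun _ _ => Or.inr hp0.le)
  have hIwq : IntegrableOn (fun x => w x ^ pStar N p) Ω :=
    integrableOn_of_continuousOn_closure hΩb
      (hwc.rpow_const fun _ _ => Or.inr (hp0.trans hpq).le)
  have hIgrad := Integrable.of_integral_ne_zero hpos.ne'
  have hΩ : MeasurableSet Ω := hΩo.measurableSet
  have hc : 0 ≤ μ * ∫ x in Ω, w x := mul_nonneg hμ.le (setIntegral_nonneg hΩ hw0)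
  have henergy := fun {s : ℝ} (hs : 0 ≤ s) =>
    energyI_const_mul (μ := μ) hΩ hw0 hIgrad hIwq hIw hs
  have henergy_one := henergy zero_le_one
  simp only [one_mul] at henergy_one
  rw [henergy ht, henergy_one]
  rcases eq_or_ne t 1 with rfl | ht1
  · simp
  · have hlt := fiberingMap_lt_fiberingMap_one hp0 hpq (hp.trans hpq).le hpos hc
      (integral_rpow_pStar_eq_of_nehari hIgrad hIwp hIwq hIw hnehari) ht ht1
    exact ⟨hlt.le, iff_of_false hlt.ne ht1⟩

/-- If `w > 0` lies on the Nehari set and `∫_Ω (|∇w|^p - λ w^p) > 0`, then the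
fibering map `t ↦ I_μ(t w)` attains its maximum over `t ≥ 0` exactly at `t = 1`. -/
theorem nehari_fibering_max
    (N : ℕ) (p lam μ : ℝ) (Ω : Set (EuclideanSpace ℝ (Fin N)))
    (hp : 1 < p) (hpN : p < N)
    (hΩne : Ω.Nonempty) (hΩb : Bornology.IsBounded Ω) (hΩo : IsOpen Ω)
    (hlam : 0 < lam) (hμ : 0 < μ)
    (w : EuclideanSpace ℝ (Fin N) → ℝ) (hw : ContDiffOn ℝ 1 w (closure Ω))
    (hwpos : ∀ x ∈ Ω, 0 < w x) (hwbd : ∀ x ∈ frontier Ω, w x = 0)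
    (hpos : 0 < ∫ x in Ω, (‖gradient w x‖ ^ p - lam * w x ^ p))
    (hnehari : (∫ x in Ω, ‖gradient w x‖ ^ p) =
      ∫ x in Ω, (lam * w x ^ p + w x ^ pStar N p - μ * w x)) :
    ∀ t : ℝ, 0 ≤ t →
      energyI N p lam μ Ω (fun x => t * w x) ≤ energyI N p lam μ Ω w ∧
      (energyI N p lam μ Ω (fun x => t * w x) = energyI N p lam μ Ω w ↔ t = 1) :=
  nehari_fibering_max_general N p lam μ Ω hp hpN hΩb hΩo hμ w hw hwpos hpos hnehari
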